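/- arXiv:2509.23890 — 5 statements merged into one kernel-verified Lean document; each statement's English description precedes it below -/
import Mathlib

section
/- For every pair of indices j, k ≥ 1, the Takenaka–Malmqvist functions satisfy the orthonormality relation (1/π) ∫_{-∞}^{∞} Φ_j(x) · conj(Φ_k(x)) dx = 1 if j = k and = 0 if j ≠ k. -/
open MeasureTheory Complex

/-- χ_k := |1 + a_k²| / (1 + a_k²).  (0-based indexing: `a k` is the paper's a_{k+1}.) -/
noncomputable def chi (a : ℕ → ℂ) (k : ℕ) : ℂ :=
  ((‖1 + a k ^ 2‖ : ℝ) : ℂ) / (1 + a k ^ 2)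

/-- Blaschke product: `Blaschke a j` is the paper's B_{j+1}, i.e. the product over the
first `j` points (so `Blaschke a 0 = 1 = B₁`). -/
noncomputable def Blaschke (a : ℕ → ℂ) (j : ℕ) (z : ℂ) : ℂ :=
  ∏ k ∈ Finset.range j, chi a k * (z - a k) / (z - starRingEnd ℂ (a k))

/-- Takenaka–Malmqvist function: `Phi a j` is the paper's Φ_{j+1}. -/
noncomputable def Phi (a : ℕ → ℂ) (j : ℕ) (z : ℂ) : ℂ :=
  (Real.sqrt ((a j).im) : ℂ) * Blaschke a j z / (z - starRingEnd ℂ (a j))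

/-!
On the real line every Blaschke factor has modulus one, so `|Φ_j|² / π` is the Cauchy density
with location `Re a_j` and scale `Im a_j`, whose integral is `1`. For `j < k`, `Φ_j · conj Φ_k`
is the restriction to `ℝ` of a rational function that is holomorphic on the closed lower
half-plane (the pole of `Φ_j` at `conj a_j` cancels against the Blaschke factor of `conj B_k`
at `a_j`) and decays like `|z|⁻²`; integrating it around the rectangles `[-R, R] × [-R, 0]`
and letting `R → ∞` shows that its integral over `ℝ` vanishes. The case `j > k` follows by
conjugation.
-/

open Filter Topology ProbabilityTheory ComplexConjugate

section LowerHalfPlane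

variable {E : Type*} [NormedAddCommGroup E]

lemma integrable_of_norm_le_div_sq [NormedSpace ℝ E] {f : ℝ → E} (hf : Continuous f) {C R : ℝ}
    (hdecay : ∀ x, R ≤ |x| → ‖f x‖ ≤ C / x ^ 2) : Integrable f := by
  refine hf.locallyIntegrable.integrable_of_isBigO_cocompact (g := fun x => (1 + x ^ 2)⁻¹) ?_
    (integrable_inv_one_add_sq.integrableAtFilter _)
  refine Asymptotics.IsBigO.of_bound (2 * |C|) ?_
  rw [cocompact_eq_atBot_atTop, ← comap_abs_atTop, eventually_comap]
  filter_upwards [eventually_ge_atTop (max R 1)] with r hr x hx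
  subst hx
  have hx1 : 1 ≤ x ^ 2 := by nlinarith [sq_abs x, le_max_right R 1]
  calc ‖f x‖ ≤ C / x ^ 2 := hdecay x (le_of_max_le_left hr)
    _ ≤ |C| / x ^ 2 := by gcongr; exact le_abs_self C
    _ ≤ 2 * |C| * ‖(1 + x ^ 2)⁻¹‖ := by
      rw [Real.norm_of_nonneg (by positivity), div_le_iff₀ (by positivity)]
      field_simp
      nlinarith [abs_nonneg C]

variable [NormedSpace ℂ E]

lemma norm_intervalIntegral_le_of_lowerHalfPlane_decay {f : ℂ → E}
    (hf : DifferentiableOn ℂ f {z | z.im ≤ 0}) {C R : ℝ} (hC : 0 ≤ C) (hR : 0 < R)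
    (hdecay : ∀ z : ℂ, z.im ≤ 0 → R ≤ ‖z‖ → ‖f z‖ ≤ C / ‖z‖ ^ 2) :
    ‖∫ x in -R..R, f x‖ ≤ 4 * C / R := by
  have hside : ∀ z : ℂ, z.im ≤ 0 → R ≤ ‖z‖ → ‖f z‖ ≤ C / R ^ 2 := fun z hz hRz =>
    (hdecay z hz hRz).trans (by gcongr)
  have hrect := integral_boundary_rect_eq_zero_of_differentiableOn f ⟨-R, -R⟩ ⟨R, 0⟩
    (hf.mono fun z hz => by
      simpa [max_eq_right (neg_nonpos.mpr hR.le)] using (mem_reProdIm.mp hz).2.2)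
  simp only [ofReal_zero, zero_mul, add_zero] at hrect
  have hIoc : ∀ y ∈ Set.uIoc (-R) 0, y ≤ 0 := fun y hy => by
    simpa [max_eq_right (neg_nonpos.mpr hR.le)] using hy.2
  have hbottom : ‖∫ x in -R..R, f (x + (-R : ℝ) * I)‖ ≤ C / R ^ 2 * |R - -R| :=
    intervalIntegral.norm_integral_le_of_norm_le_const fun x _ => hside _ (by simp [hR.le])
      (by simpa [abs_of_pos hR] using abs_im_le_norm (x + (-R : ℝ) * I))
  have hright : ‖∫ y in -R..0, f (R + y * I)‖ ≤ C / R ^ 2 * |0 - -R| :=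
    intervalIntegral.norm_integral_le_of_norm_le_const fun y hy => hside _
      (by simpa using hIoc y hy) (by simpa [abs_of_pos hR] using abs_re_le_norm (R + y * I))
  have hleft : ‖∫ y in -R..0, f ((-R : ℝ) + y * I)‖ ≤ C / R ^ 2 * |0 - -R| :=
    intervalIntegral.norm_integral_le_of_norm_le_const fun y hy => hside _
      (by simpa using hIoc y hy)
      (by simpa [abs_of_pos hR] using abs_re_le_norm ((-R : ℝ) + y * I))
  rw [show ∫ x in -R..R, f x = (∫ x in -R..R, f (x + (-R : ℝ) * I)) +
      I • (∫ y in -R..0, f (R + y * I)) - I • (∫ y in -R..0, f ((-R : ℝ) + y * I)) from by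
    linear_combination (norm := module) -hrect]
  calc _ ≤ ‖∫ x in -R..R, f (x + (-R : ℝ) * I)‖ + ‖∫ y in -R..0, f (R + y * I)‖ +
        ‖∫ y in -R..0, f ((-R : ℝ) + y * I)‖ := by
        refine (norm_sub_le _ _).trans (add_le_add (norm_add_le _ _) le_rfl) |>.trans ?_
        simp only [norm_smul, norm_I, one_mul, le_refl]
    _ ≤ C / R ^ 2 * |R - -R| + C / R ^ 2 * |0 - -R| + C / R ^ 2 * |0 - -R| := by gcongr
    _ = 4 * C / R := by
        rw [abs_of_pos (by linarith), abs_of_pos (by linarith)]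
        field_simp
        ring

theorem integral_eq_zero_of_lowerHalfPlane_decay [CompleteSpace E] {f : ℂ → E}
    (hf : DifferentiableOn ℂ f {z | z.im ≤ 0}) {C R : ℝ} (hC : 0 ≤ C)
    (hdecay : ∀ z : ℂ, z.im ≤ 0 → R ≤ ‖z‖ → ‖f z‖ ≤ C / ‖z‖ ^ 2) :
    ∫ x : ℝ, f x = 0 := by
  have hcont : Continuous fun x : ℝ => f x :=
    hf.continuousOn.comp_continuous continuous_ofReal fun x => by simp
  have hint : Integrable fun x : ℝ => f x := integrable_of_norm_le_div_sq hcont (R := R)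
    fun x hx => by simpa using hdecay x (by simp) (by simpa using hx)
  refine tendsto_nhds_unique
    (intervalIntegral_tendsto_integral hint tendsto_neg_atTop_atBot tendsto_id) ?_
  refine squeeze_zero_norm' ?_
    (by simpa using (tendsto_const_nhds (x := 4 * C)).div_atTop tendsto_id)
  filter_upwards [eventually_ge_atTop (max R 1)] with r hr
  exact norm_intervalIntegral_le_of_lowerHalfPlane_decay hf hC
    (lt_of_lt_of_le one_pos (le_of_max_le_right hr))
    fun z hz hrz => hdecay z hz ((le_of_max_le_left hr).trans hrz)

end LowerHalfPlane

lemma sub_ne_zero_of_im_nonpos_of_im_pos {z w : ℂ} (hz : z.im ≤ 0) (hw : 0 < w.im) : z - w ≠ 0 :=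
  sub_ne_zero.mpr fun h => by rw [h] at hz; linarith

lemma ofReal_sub_conj (x : ℝ) (w : ℂ) : (x : ℂ) - conj w = conj (x - w) := by
  rw [map_sub, conj_ofReal]

lemma ofReal_sub_ne_zero {w : ℂ} (hw : 0 < w.im) (x : ℝ) : (x : ℂ) - w ≠ 0 :=
  sub_ne_zero_of_im_nonpos_of_im_pos (by simp) hw

lemma ofReal_sub_conj_ne_zero {w : ℂ} (hw : 0 < w.im) (x : ℝ) : (x : ℂ) - conj w ≠ 0 := by
  rw [ofReal_sub_conj, map_ne_zero]
  exact ofReal_sub_ne_zero hw x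

section Blaschke

variable {a : ℕ → ℂ}

lemma norm_chi {k : ℕ} (hk : a k ^ 2 ≠ -1) : ‖chi a k‖ = 1 := by
  have hne : 1 + a k ^ 2 ≠ 0 := fun h => hk (by linear_combination h)
  rw [chi, norm_div, norm_real, norm_norm, div_self (norm_ne_zero_iff.mpr hne)]

lemma norm_Blaschke_ofReal (ha : ∀ k, 0 < (a k).im) (ha2 : ∀ k, a k ^ 2 ≠ -1) (j : ℕ) (x : ℝ) :
    ‖Blaschke a j x‖ = 1 := by
  refine (norm_prod _ _).trans (Finset.prod_eq_one fun i _ => ?_)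
  rw [norm_div, norm_mul, norm_chi (ha2 i), one_mul, ofReal_sub_conj, norm_conj,
    div_self (norm_ne_zero_iff.mpr (ofReal_sub_ne_zero (ha i) x))]

lemma Blaschke_mul_conj_Blaschke (ha : ∀ k, 0 < (a k).im) (ha2 : ∀ k, a k ^ 2 ≠ -1) {j k : ℕ}
    (hjk : j ≤ k) (x : ℝ) :
    Blaschke a j x * conj (Blaschke a k x) =
      ∏ i ∈ Finset.Ico j k, conj (chi a i) * ((x - conj (a i)) / (x - a i)) := by
  have hsplit : Blaschke a k x = Blaschke a j x *
      ∏ i ∈ Finset.Ico j k, chi a i * (x - a i) / (x - conj (a i)) :=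
    (Finset.prod_range_mul_prod_Ico _ hjk).symm
  rw [hsplit, map_mul, ← mul_assoc, mul_conj, normSq_eq_norm_sq, norm_Blaschke_ofReal ha ha2]
  simp [map_prod, mul_div_assoc]

lemma normSq_Phi_ofReal (ha : ∀ k, 0 < (a k).im) (ha2 : ∀ k, a k ^ 2 ≠ -1) (j : ℕ) (x : ℝ) :
    normSq (Phi a j x) = Real.pi * cauchyPDFReal (a j).re (a j).im.toNNReal x := by
  rw [cauchyPDFReal, Real.coe_toNNReal _ (ha j).le, ← Complex.sq_norm, Phi, norm_div, norm_mul,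
    norm_Blaschke_ofReal ha ha2, norm_real, Real.norm_of_nonneg (Real.sqrt_nonneg _), div_pow,
    mul_one, Real.sq_sqrt (ha j).le, Complex.sq_norm, normSq_apply]
  simp only [sub_re, sub_im, ofReal_re, ofReal_im, conj_re, conj_im]
  field_simp
  ring

lemma integral_Phi_mul_conj_Phi_self (ha : ∀ k, 0 < (a k).im) (ha2 : ∀ k, a k ^ 2 ≠ -1)
    (j : ℕ) :
    ∫ x : ℝ, Phi a j x * conj (Phi a j x) = Real.pi := by
  simp_rw [mul_conj, normSq_Phi_ofReal ha ha2]
  rw [integral_complex_ofReal, integral_const_mul,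
    integral_cauchyPDFReal_eq_one _ (Real.toNNReal_pos.mpr (ha j)).ne', mul_one]

end Blaschke

/-- The extension of `x ↦ Φ_j(x) conj Φ_k(x)` (for `j < k`) from `ℝ` to `ℂ`, written with the
factor `z - conj a_j` already cancelled. -/
noncomputable def crossTerm (a : ℕ → ℂ) (j k : ℕ) (z : ℂ) : ℂ :=
  (Real.sqrt (a j).im * Real.sqrt (a k).im * ∏ i ∈ Finset.Ico j k, conj (chi a i)) *
    (∏ i ∈ Finset.Ico (j + 1) k, (z - conj (a i)) / (z - a i)) / ((z - a j) * (z - a k))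

section CrossTerm

variable {a : ℕ → ℂ} {j k : ℕ}

lemma Phi_mul_conj_Phi_of_lt (ha : ∀ k, 0 < (a k).im) (ha2 : ∀ k, a k ^ 2 ≠ -1) (hjk : j < k)
    (x : ℝ) : Phi a j x * conj (Phi a k x) = crossTerm a j k x := by
  have hB := Blaschke_mul_conj_Blaschke ha ha2 hjk.le x
  rw [Finset.prod_mul_distrib, Finset.prod_eq_prod_Ico_succ_bot hjk
    (fun i => ((x : ℂ) - conj (a i)) / (x - a i))] at hB
  have hj := ofReal_sub_ne_zero (ha j) x
  have hj' := ofReal_sub_conj_ne_zero (ha j) x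
  have hk := ofReal_sub_ne_zero (ha k) x
  rw [Phi, Phi, crossTerm, map_div₀, map_mul, conj_ofReal, map_sub, conj_ofReal, conj_conj,
    div_mul_div_comm, mul_mul_mul_comm, hB]
  field_simp

lemma differentiableOn_crossTerm (ha : ∀ k, 0 < (a k).im) :
    DifferentiableOn ℂ (crossTerm a j k) {z | z.im ≤ 0} := by
  intro z hz
  have hne : ∀ i, z - a i ≠ 0 := fun i => sub_ne_zero_of_im_nonpos_of_im_pos hz (ha i)
  unfold crossTerm
  fun_prop (disch := simp [hne])

lemma exists_norm_crossTerm_le (a : ℕ → ℂ) (hjk : j ≤ k) :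
    ∃ C R : ℝ, 0 ≤ C ∧ ∀ z : ℂ, R ≤ ‖z‖ → ‖crossTerm a j k z‖ ≤ C / ‖z‖ ^ 2 := by
  obtain ⟨c, hc⟩ : ∃ c : ℂ, ∀ z, crossTerm a j k z =
      c * (∏ i ∈ Finset.Ico (j + 1) k, (z - conj (a i)) / (z - a i)) / ((z - a j) * (z - a k)) :=
    ⟨_, fun z => rfl⟩
  set M : ℝ := 1 + ∑ i ∈ Finset.range (k + 1), ‖a i‖
  have hM : ∀ i ≤ k, ‖a i‖ ≤ M := fun i hi => by
    have := Finset.single_le_sum (f := fun i => ‖a i‖) (fun i _ => norm_nonneg _)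
      (Finset.mem_range.mpr (Nat.lt_succ_of_le hi))
    linarith
  refine ⟨4 * 3 ^ k * ‖c‖, 2 * M, by positivity, fun z hz => ?_⟩
  have hz0 : 0 < ‖z‖ := by
    have : 0 ≤ ∑ i ∈ Finset.range (k + 1), ‖a i‖ := by positivity
    linarith
  have hlow : ∀ i ≤ k, ‖z‖ / 2 ≤ ‖z - a i‖ := fun i hi => by
    linarith [norm_sub_norm_le z (a i), hM i hi]
  have hratio : ∀ i ∈ Finset.Ico (j + 1) k, ‖(z - conj (a i)) / (z - a i)‖ ≤ 3 := by
    intro i hi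
    have hik : i ≤ k := (Finset.mem_Ico.mp hi).2.le
    have hup : ‖z - conj (a i)‖ ≤ 3 / 2 * ‖z‖ := by
      linarith [norm_sub_le z (conj (a i)), RCLike.norm_conj (a i), hM i hik]
    rw [norm_div, div_le_iff₀ (by linarith [hlow i hik])]
    linarith [hlow i hik]
  have hprod : ‖∏ i ∈ Finset.Ico (j + 1) k, (z - conj (a i)) / (z - a i)‖ ≤ 3 ^ k := by
    calc _ ≤ ∏ _i ∈ Finset.Ico (j + 1) k, (3 : ℝ) :=
          (norm_prod _ _).trans_le (Finset.prod_le_prod (fun _ _ => norm_nonneg _) hratio)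
      _ ≤ 3 ^ k := by
        rw [Finset.prod_const, Nat.card_Ico]
        exact pow_le_pow_right₀ (by norm_num) (by omega)
  calc ‖crossTerm a j k z‖ = ‖c‖ * ‖∏ i ∈ Finset.Ico (j + 1) k, (z - conj (a i)) / (z - a i)‖ /
        (‖z - a j‖ * ‖z - a k‖) := by rw [hc, norm_div, norm_mul, norm_mul]
    _ ≤ ‖c‖ * 3 ^ k / (‖z‖ / 2 * (‖z‖ / 2)) := by
      gcongr
      exacts [hlow j hjk, hlow k le_rfl]
    _ = 4 * 3 ^ k * ‖c‖ / ‖z‖ ^ 2 := by ring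

lemma integral_Phi_mul_conj_Phi_of_lt (ha : ∀ k, 0 < (a k).im) (ha2 : ∀ k, a k ^ 2 ≠ -1)
    (hjk : j < k) : ∫ x : ℝ, Phi a j x * conj (Phi a k x) = 0 := by
  obtain ⟨C, R, hC, hdecay⟩ := exists_norm_crossTerm_le a hjk.le
  simp_rw [Phi_mul_conj_Phi_of_lt ha ha2 hjk]
  exact integral_eq_zero_of_lowerHalfPlane_decay (differentiableOn_crossTerm ha) hC
    fun z _ => hdecay z

end CrossTerm

/-- Orthonormality of the Takenaka–Malmqvist system:
(1/π) ∫ Φ_j(x) conj(Φ_k(x)) dx = δ_{jk}. -/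
theorem stmt_0 (a : ℕ → ℂ) (ha : ∀ k, 0 < (a k).im) (ha2 : ∀ k, a k ^ 2 ≠ -1)
    (j k : ℕ) :
    (1 / Real.pi : ℂ) * ∫ x : ℝ, Phi a j x * starRingEnd ℂ (Phi a k x) =
      if j = k then 1 else 0 := by
  rcases lt_trichotomy j k with hjk | rfl | hjk
  · rw [integral_Phi_mul_conj_Phi_of_lt ha ha2 hjk, if_neg hjk.ne, mul_zero]
  · rw [integral_Phi_mul_conj_Phi_self ha ha2, if_pos rfl, one_div,
      inv_mul_cancel₀ (ofReal_ne_zero.mpr Real.pi_ne_zero)]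
  · have hswap : ∀ x : ℝ, Phi a j x * conj (Phi a k x) = conj (Phi a k x * conj (Phi a j x)) :=
      fun x => by rw [map_mul, conj_conj, mul_comm]
    rw [integral_congr_ae (.of_forall hswap), integral_conj,
      integral_Phi_mul_conj_Phi_of_lt ha ha2 hjk, if_neg hjk.ne', map_zero, mul_zero]
end

section
/- (Dzhrbashyan identity / Christoffel–Darboux analogue.) For every positive integer n and all z, ζ ∈ ℂ with z ≠ conj(ζ), z ≠ conj(a_k) and ζ ≠ conj(a_k) for k = 1, …, n, one has 1/(2i(conj(ζ) − z)) = Σ_{j=1}^{n} conj(Φ_j(ζ)) · Φ_j(z) + conj(B_{n+1}(ζ)) · B_{n+1}(z)/(2i(conj(ζ) − z)). -/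
/-!
Write `b_j(z) = χ_j (z - a_j)/(z - conj a_j)`, so that `B_{j+1} = B_j b_j`. Since `|χ_j| = 1`,
`1 - conj(b_j(ζ)) b_j(z) = 2i(conj ζ - z) Im a_j / ((conj ζ - a_j)(z - conj a_j))`, and after
multiplying by `conj(B_j(ζ)) B_j(z) / (2i(conj ζ - z))` the right-hand side becomes
`conj(Φ_j(ζ)) Φ_j(z)`. The identity is therefore a telescoping sum starting from `B_1 = 1`.
-/

open MeasureTheory Complex

lemma conj_chi_mul_chi (a : ℕ → ℂ) (k : ℕ) (h : 1 + a k ^ 2 ≠ 0) :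
    starRingEnd ℂ (chi a k) * chi a k = 1 := by
  have hnorm : ‖chi a k‖ = 1 := by
    rw [chi, norm_div, norm_real, Real.norm_of_nonneg (norm_nonneg _),
      div_self (norm_ne_zero_iff.2 h)]
  rw [conj_mul', hnorm]
  simp

lemma Blaschke_succ (a : ℕ → ℂ) (n : ℕ) (z : ℂ) :
    Blaschke a (n + 1) z =
      Blaschke a n z * (chi a n * (z - a n) / (z - starRingEnd ℂ (a n))) :=
  Finset.prod_range_succ _ _

lemma one_sub_conj_mul_blaschkeFactor (α c z ζ : ℂ) (hc : starRingEnd ℂ c * c = 1)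
    (hz : z ≠ starRingEnd ℂ α) (hζ : ζ ≠ starRingEnd ℂ α) :
    1 - starRingEnd ℂ (c * (ζ - α) / (ζ - starRingEnd ℂ α)) *
        (c * (z - α) / (z - starRingEnd ℂ α)) =
      2 * I * (starRingEnd ℂ ζ - z) *
        (α.im / ((starRingEnd ℂ ζ - α) * (z - starRingEnd ℂ α))) := by
  have hz' : z - starRingEnd ℂ α ≠ 0 := sub_ne_zero.2 hz
  have hζ' : starRingEnd ℂ ζ - α ≠ 0 := by
    rw [← conj_conj α, ← map_sub]
    exact (map_ne_zero _).2 (sub_ne_zero.2 hζ)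
  have hα : α - starRingEnd ℂ α = 2 * α.im * I := by rw [sub_conj]; push_cast; ring
  simp only [map_mul, map_div₀, map_sub, conj_conj]
  field_simp
  linear_combination
    (starRingEnd ℂ ζ - z) * hα - (z - α) * (starRingEnd ℂ ζ - starRingEnd ℂ α) * hc

lemma conj_Phi_mul_Phi (a : ℕ → ℂ) (j : ℕ) (hj : 0 ≤ (a j).im) (z ζ : ℂ) :
    starRingEnd ℂ (Phi a j ζ) * Phi a j z =
      starRingEnd ℂ (Blaschke a j ζ) * Blaschke a j z *
        ((a j).im / ((starRingEnd ℂ ζ - a j) * (z - starRingEnd ℂ (a j)))) := by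
  have hsqrt : ((Real.sqrt (a j).im : ℝ) : ℂ) * (Real.sqrt (a j).im : ℝ) = (a j).im := by
    rw [← ofReal_mul, Real.mul_self_sqrt hj]
  simp only [Phi, map_mul, map_div₀, map_sub, conj_ofReal, conj_conj]
  rw [div_mul_div_comm, mul_mul_mul_comm, hsqrt]
  ring

lemma conj_Blaschke_mul_Blaschke_div_eq (a : ℕ → ℂ) (n : ℕ) (ha : 0 ≤ (a n).im)
    (h2 : 1 + a n ^ 2 ≠ 0) (z ζ : ℂ) (hzζ : z ≠ starRingEnd ℂ ζ)
    (hz : z ≠ starRingEnd ℂ (a n)) (hζ : ζ ≠ starRingEnd ℂ (a n)) :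
    starRingEnd ℂ (Blaschke a n ζ) * Blaschke a n z / (2 * I * (starRingEnd ℂ ζ - z)) =
      starRingEnd ℂ (Phi a n ζ) * Phi a n z +
        starRingEnd ℂ (Blaschke a (n + 1) ζ) * Blaschke a (n + 1) z /
          (2 * I * (starRingEnd ℂ ζ - z)) := by
  have hd : 2 * I * (starRingEnd ℂ ζ - z) ≠ 0 :=
    mul_ne_zero (mul_ne_zero two_ne_zero I_ne_zero) (sub_ne_zero.2 (Ne.symm hzζ))
  have hfactor := one_sub_conj_mul_blaschkeFactor (a n) (chi a n) z ζ
    (conj_chi_mul_chi a n h2) hz hζ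
  rw [conj_Phi_mul_Phi a n ha, Blaschke_succ, Blaschke_succ, map_mul]
  set bζ := chi a n * (ζ - a n) / (ζ - starRingEnd ℂ (a n))
  set bz := chi a n * (z - a n) / (z - starRingEnd ℂ (a n))
  set K := ((a n).im : ℂ) / ((starRingEnd ℂ ζ - a n) * (z - starRingEnd ℂ (a n)))
  field_simp
  linear_combination starRingEnd ℂ (Blaschke a n ζ) * Blaschke a n z * hfactor

theorem stmt_1_general (a : ℕ → ℂ) (ha : ∀ k, 0 < (a k).im) (ha2 : ∀ k, a k ^ 2 ≠ -1)
    (n : ℕ) (z ζ : ℂ) (hzζ : z ≠ starRingEnd ℂ ζ)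
    (hz : ∀ k < n, z ≠ starRingEnd ℂ (a k)) (hζ : ∀ k < n, ζ ≠ starRingEnd ℂ (a k)) :
    1 / (2 * I * (starRingEnd ℂ ζ - z)) =
      (∑ j ∈ Finset.range n, starRingEnd ℂ (Phi a j ζ) * Phi a j z) +
        starRingEnd ℂ (Blaschke a n ζ) * Blaschke a n z /
          (2 * I * (starRingEnd ℂ ζ - z)) := by
  induction n with
  | zero => simp [Blaschke]
  | succ n ih =>
    have h2 : 1 + a n ^ 2 ≠ 0 := fun h => ha2 n (by linear_combination h)
    rw [Finset.sum_range_succ, add_assoc, ← conj_Blaschke_mul_Blaschke_div_eq a n (ha n).le h2 z ζ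
      hzζ (hz n n.lt_succ_self) (hζ n n.lt_succ_self)]
    exact ih (fun k hk => hz k (hk.trans n.lt_succ_self))
      (fun k hk => hζ k (hk.trans n.lt_succ_self))

/-- Dzhrbashyan identity (Christoffel–Darboux analogue):
1/(2i(conj ζ − z)) = Σ_{j=1}^n conj(Φ_j(ζ)) Φ_j(z) + conj(B_{n+1}(ζ)) B_{n+1}(z)/(2i(conj ζ − z)).
Here `Blaschke a n` is the paper's B_{n+1}. -/
theorem stmt_1 (a : ℕ → ℂ) (ha : ∀ k, 0 < (a k).im) (ha2 : ∀ k, a k ^ 2 ≠ -1)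
    (n : ℕ) (hn : 1 ≤ n) (z ζ : ℂ) (hzζ : z ≠ starRingEnd ℂ ζ)
    (hz : ∀ k < n, z ≠ starRingEnd ℂ (a k)) (hζ : ∀ k < n, ζ ≠ starRingEnd ℂ (a k)) :
    1 / (2 * I * (starRingEnd ℂ ζ - z)) =
      (∑ j ∈ Finset.range n, starRingEnd ℂ (Phi a j ζ) * Phi a j z) +
        starRingEnd ℂ (Blaschke a n ζ) * Blaschke a n z /
          (2 * I * (starRingEnd ℂ ζ - z)) :=
  stmt_1_general a ha ha2 n z ζ hzζ hz hζ
end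

section
/- For every λ > 0 and all nonnegative integers k and j, ∫_{-∞}^{∞} dt/((iλ − t)^{k+1} (−iλ − t)^{j+1}) = (π/λ) · (−1)^{j} · binom(j+k, j)/(2iλ)^{j+k}. -/
/-! With `a = iλ` and `b = -iλ`, the partial fraction identity
`1 / ((a - t) (b - t)) = (1 / (b - t) - 1 / (a - t)) / (a - b)` lowers the total order of the
poles by one. A single pole `1 / (c - t) ^ m` with `m ≥ 2` and `Im c ≠ 0` integrates to zero,
since it has the antiderivative `(c - t) ^ (1 - m) / (m - 1)`, which vanishes at `±∞`.
Unwinding the recursion is Pascal's rule, and what remains is `∫ dt / (t ^ 2 + λ ^ 2) = π / λ`. -/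

open MeasureTheory Complex Filter Topology

namespace TwoPole

variable {c : ℂ}

lemma abs_im_le_norm_sub_ofReal (c : ℂ) (t : ℝ) : |c.im| ≤ ‖c - t‖ := by
  simpa using abs_im_le_norm (c - t)

lemma sub_ofReal_ne_zero (hc : c.im ≠ 0) (t : ℝ) : c - t ≠ 0 := by
  intro h
  simpa [h] using abs_im_le_norm_sub_ofReal c t |>.trans_lt' (abs_pos.2 hc)

lemma norm_inv_sub_ofReal_pow_le (hc : c.im ≠ 0) (m : ℕ) (t : ℝ) :
    ‖((c - t) ^ m)⁻¹‖ ≤ (|c.im| ^ m)⁻¹ := by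
  rw [norm_inv, norm_pow]
  exact inv_anti₀ (by positivity)
    (pow_le_pow_left₀ (abs_nonneg _) (abs_im_le_norm_sub_ofReal c t) m)

lemma integrable_inv_sub_ofReal_sq (hc : c.im ≠ 0) :
    Integrable fun t : ℝ => ((c - t) ^ 2)⁻¹ := by
  have hcauchy : Integrable fun t : ℝ => (c.im ^ 2)⁻¹ * (1 + ((t - c.re) / c.im) ^ 2)⁻¹ :=
    ((integrable_inv_one_add_sq.comp_div hc).comp_sub_right c.re).const_mul _
  refine hcauchy.mono' (by fun_prop) (Eventually.of_forall fun t => le_of_eq ?_)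
  rw [norm_inv, norm_pow, ← normSq_eq_norm_sq, normSq_apply]
  simp only [sub_re, ofReal_re, sub_im, ofReal_im, sub_zero]
  field_simp
  ring

lemma integrable_inv_sub_ofReal_pow (hc : c.im ≠ 0) {m : ℕ} (hm : 2 ≤ m) :
    Integrable fun t : ℝ => ((c - t) ^ m)⁻¹ := by
  obtain ⟨n, rfl⟩ := Nat.exists_eq_add_of_le' hm
  have := (integrable_inv_sub_ofReal_sq hc).bdd_mul (c := (|c.im| ^ n)⁻¹) (by fun_prop)
    (Eventually.of_forall (norm_inv_sub_ofReal_pow_le hc n))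
  simpa only [pow_add, mul_inv, mul_comm] using this

lemma tendsto_inv_sub_ofReal_pow_cobounded (c : ℂ) {m : ℕ} (hm : m ≠ 0) :
    Tendsto (fun t : ℝ => ((c - t) ^ m)⁻¹) (Bornology.cobounded ℝ) (𝓝 0) := by
  have hofReal :
      Tendsto (fun t : ℝ => (t : ℂ)) (Bornology.cobounded ℝ) (Bornology.cobounded ℂ) := by
    rw [← tendsto_norm_atTop_iff_cobounded]
    simp only [Complex.norm_real]
    exact tendsto_norm_cobounded_atTop
  have := ((tendsto_inv₀_cobounded.comp ((tendsto_const_sub_cobounded c).comp hofReal)).pow m)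
  simpa [zero_pow hm, inv_pow] using this

lemma hasDerivAt_inv_sub_ofReal_pow (hc : c.im ≠ 0) (n : ℕ) (t : ℝ) :
    HasDerivAt (fun s : ℝ => ((c - s) ^ (n + 1))⁻¹)
      ((n + 1) * ((c - t) ^ (n + 2))⁻¹) t := by
  have hct := sub_ofReal_ne_zero hc t
  refine ((((hasDerivAt_id (t : ℂ)).const_sub c).comp_ofReal).pow (n + 1)).inv
    (pow_ne_zero _ hct) |>.congr_deriv ?_
  simp only [id, Pi.pow_apply, Nat.add_sub_cancel]
  push_cast
  field_simp
  ring

lemma integral_inv_sub_ofReal_pow (hc : c.im ≠ 0) {m : ℕ} (hm : 2 ≤ m) :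
    ∫ t : ℝ, ((c - t) ^ m)⁻¹ = 0 := by
  obtain ⟨n, rfl⟩ := Nat.exists_eq_add_of_le' hm
  have hF (t : ℝ) : HasDerivAt (fun s : ℝ => ((n + 1 : ℂ))⁻¹ * ((c - s) ^ (n + 1))⁻¹)
      ((c - t) ^ (n + 2))⁻¹ t := by
    refine (hasDerivAt_inv_sub_ofReal_pow hc n t).const_mul ((n + 1 : ℂ))⁻¹ |>.congr_deriv ?_
    rw [← mul_assoc, inv_mul_cancel₀ (Nat.cast_add_one_ne_zero n), one_mul]
  have hlim := (tendsto_inv_sub_ofReal_pow_cobounded c (Nat.succ_ne_zero n)).const_mul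
    ((n + 1 : ℂ))⁻¹
  rw [mul_zero] at hlim
  simpa using integral_of_hasDerivAt_of_tendsto hF (integrable_inv_sub_ofReal_pow hc hm)
    (hlim.mono_left IsOrderBornology.atBot_le_cobounded)
    (hlim.mono_left IsOrderBornology.atTop_le_cobounded)

noncomputable def twoPole (a b : ℂ) (p q : ℕ) (t : ℝ) : ℂ :=
  ((a - t) ^ p * (b - t) ^ q)⁻¹

variable {a b : ℂ}

lemma twoPole_zero_left (a b : ℂ) (q : ℕ) :
    twoPole a b 0 q = fun t : ℝ => ((b - t) ^ q)⁻¹ := by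
  funext t
  simp [twoPole]

lemma twoPole_zero_right (a b : ℂ) (p : ℕ) :
    twoPole a b p 0 = fun t : ℝ => ((a - t) ^ p)⁻¹ := by
  funext t
  simp [twoPole]

lemma twoPole_add_one_add_one_eq_mul (a b : ℂ) (p q : ℕ) (t : ℝ) :
    twoPole a b (p + 1) (q + 1) t = twoPole a b 1 1 t * twoPole a b p q t := by
  simp only [twoPole, pow_succ, mul_inv]
  ring

lemma twoPole_add_one_add_one_eq_sub (ha : a.im ≠ 0) (hb : b.im ≠ 0) (hab : a ≠ b) (p q : ℕ)
    (t : ℝ) : twoPole a b (p + 1) (q + 1) t =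
      (a - b)⁻¹ * (twoPole a b p (q + 1) t - twoPole a b (p + 1) q t) := by
  have hat := sub_ofReal_ne_zero ha t
  have hbt := sub_ofReal_ne_zero hb t
  have hab' : a - b ≠ 0 := sub_ne_zero.2 hab
  simp only [twoPole]
  field_simp
  ring

lemma norm_twoPole_le (ha : a.im ≠ 0) (hb : b.im ≠ 0) (p q : ℕ) (t : ℝ) :
    ‖twoPole a b p q t‖ ≤ (|a.im| ^ p)⁻¹ * (|b.im| ^ q)⁻¹ := by
  rw [twoPole, mul_inv, norm_mul]
  exact mul_le_mul (norm_inv_sub_ofReal_pow_le ha p t) (norm_inv_sub_ofReal_pow_le hb q t)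
    (norm_nonneg _) (by positivity)

lemma measurable_twoPole (a b : ℂ) (p q : ℕ) : Measurable (twoPole a b p q) := by
  unfold twoPole
  fun_prop

lemma integrable_twoPole_one_one (ha : a.im ≠ 0) (hb : b.im ≠ 0) :
    Integrable (twoPole a b 1 1) := by
  refine ((integrable_inv_sub_ofReal_sq ha).norm.add (integrable_inv_sub_ofReal_sq hb).norm).mono'
    (measurable_twoPole a b 1 1).aestronglyMeasurable (Eventually.of_forall fun t => ?_)
  simp only [Pi.add_apply, twoPole, pow_one, mul_inv, norm_mul, norm_inv, norm_pow, ← inv_pow]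
  nlinarith [sq_nonneg (‖a - t‖⁻¹ - ‖b - t‖⁻¹)]

lemma integrable_twoPole (ha : a.im ≠ 0) (hb : b.im ≠ 0) {p q : ℕ} (h : 2 ≤ p + q) :
    Integrable (twoPole a b p q) := by
  rcases p with _ | p
  · rw [twoPole_zero_left]
    exact integrable_inv_sub_ofReal_pow hb (by omega)
  rcases q with _ | q
  · rw [twoPole_zero_right]
    exact integrable_inv_sub_ofReal_pow ha h
  simp_rw [funext (twoPole_add_one_add_one_eq_mul a b p q)]
  exact (integrable_twoPole_one_one ha hb).mul_bdd
    (measurable_twoPole a b p q).aestronglyMeasurable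
    (Eventually.of_forall (norm_twoPole_le ha hb p q))

lemma integral_twoPole_add_one_add_one (ha : a.im ≠ 0) (hb : b.im ≠ 0) (hab : a ≠ b)
    {p q : ℕ} (h : 1 ≤ p + q) : ∫ t, twoPole a b (p + 1) (q + 1) t =
      (a - b)⁻¹ * ((∫ t, twoPole a b p (q + 1) t) - ∫ t, twoPole a b (p + 1) q t) := by
  simp_rw [twoPole_add_one_add_one_eq_sub ha hb hab]
  rw [integral_const_mul, integral_sub (integrable_twoPole ha hb (by omega))
    (integrable_twoPole ha hb (by omega))]

lemma integral_twoPole_eq (ha : a.im ≠ 0) (hb : b.im ≠ 0) (hab : a ≠ b) (p q : ℕ) :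
    ∫ t, twoPole a b (p + 1) (q + 1) t =
      (-1) ^ q * (p + q).choose q / (a - b) ^ (p + q) * ∫ t, twoPole a b 1 1 t := by
  induction p generalizing q with
  | zero =>
    induction q with
    | zero => simp
    | succ q ihq =>
      rw [integral_twoPole_add_one_add_one ha hb hab (by omega), ihq, twoPole_zero_left,
        integral_inv_sub_ofReal_pow hb (by omega)]
      simp only [zero_add, Nat.choose_self]
      generalize a - b = d
      ring
  | succ p ihp =>
    induction q with
    | zero =>
      rw [integral_twoPole_add_one_add_one ha hb hab (by omega), ihp, twoPole_zero_right,
        integral_inv_sub_ofReal_pow ha (by omega)]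
      simp only [add_zero, Nat.choose_zero_right]
      generalize a - b = d
      ring
    | succ q ihq =>
      rw [integral_twoPole_add_one_add_one ha hb hab (by omega), ihp, ihq,
        show p + 1 + (q + 1) = p + (q + 1) + 1 by omega, Nat.choose_succ_succ',
        show p + (q + 1) = p + 1 + q by omega]
      push_cast
      generalize a - b = d
      ring

lemma integral_univ_inv_sq_add_sq {c : ℝ} (hc : c ≠ 0) :
    ∫ t : ℝ, (t ^ 2 + c ^ 2)⁻¹ = Real.pi / |c| := by
  have h (t : ℝ) : (t ^ 2 + c ^ 2)⁻¹ = (c ^ 2)⁻¹ * (1 + (t / c) ^ 2)⁻¹ := by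
    field_simp
    ring
  simp_rw [h]
  rw [integral_const_mul, Measure.integral_comp_div (fun x : ℝ => (1 + x ^ 2)⁻¹) c,
    integral_univ_inv_one_add_sq, smul_eq_mul, ← sq_abs c]
  field_simp

lemma integral_twoPole_I_one_one {lam : ℝ} (hlam : lam ≠ 0) :
    ∫ t, twoPole (I * lam) (-(I * lam)) 1 1 t = (Real.pi / |lam| : ℝ) := by
  have h (t : ℝ) : twoPole (I * lam) (-(I * lam)) 1 1 t = ((t ^ 2 + lam ^ 2)⁻¹ : ℝ) := by
    simp only [twoPole, pow_one]
    push_cast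
    ring_nf
    rw [I_sq]
    ring_nf
  simp_rw [h]
  rw [integral_complex_ofReal, integral_univ_inv_sq_add_sq hlam]

end TwoPole

/-- ∫ dt/((iλ − t)^{k+1} (−iλ − t)^{j+1}) = (π/λ)(−1)^j C(j+k,j)/(2iλ)^{j+k}. -/
theorem stmt_7 (lam : ℝ) (hlam : 0 < lam) (k j : ℕ) :
    ∫ t : ℝ, 1 / ((I * lam - t) ^ (k + 1) * (-(I * lam) - t) ^ (j + 1)) =
      (Real.pi / lam : ℂ) * (-1) ^ j * ((j + k).choose j : ℂ) / (2 * I * lam) ^ (j + k) := by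
  have ha : (I * lam).im ≠ 0 := by simpa using hlam.ne'
  have hb : (-(I * lam)).im ≠ 0 := by simpa using hlam.ne'
  have hab : I * lam ≠ -(I * lam) := by simp [self_eq_neg, hlam.ne']
  calc ∫ t : ℝ, 1 / ((I * lam - t) ^ (k + 1) * (-(I * lam) - t) ^ (j + 1))
      = ∫ t, TwoPole.twoPole (I * lam) (-(I * lam)) (k + 1) (j + 1) t := by
        simp only [one_div, TwoPole.twoPole]
    _ = (-1) ^ j * (k + j).choose j / (I * lam - -(I * lam)) ^ (k + j) *
          ∫ t, TwoPole.twoPole (I * lam) (-(I * lam)) 1 1 t :=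
        TwoPole.integral_twoPole_eq ha hb hab k j
    _ = _ := by
      rw [TwoPole.integral_twoPole_I_one_one hlam.ne', abs_of_pos hlam, add_comm k j]
      push_cast
      ring
end

section
/- Let n and k be nonnegative integers with n ≥ 1, let b_1, …, b_n ∈ ℂ, and let z ∈ ℂ with z ≠ b_j for all j. Then the k-th complex derivative of the function w ↦ ∏_{j=1}^{n} (w − b_j)^{−1} at z equals (−1)^{k} k! · ν_k(z, b)/τ_n(z, b), where τ_n(z, b) := ∏_{j=1}^{n} (z − b_j) and ν_k(z, b) := Σ_{k_1+⋯+k_n=k, k_i≥0} ∏_{j=1}^{n} (z − b_j)^{−k_j} (so ν_0 = 1). -/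
open MeasureTheory Complex

/-- τ_n(z, b) := ∏_{k=1}^n (z − b_k). -/
noncomputable def tau (n : ℕ) (z : ℂ) (b : ℕ → ℂ) : ℂ :=
  ∏ k ∈ Finset.range n, (z - b k)

/-- ν_m(z, b) := Σ_{k₁+⋯+k_n = m} ∏_{j=1}^n (z − b_j)^{−k_j}. -/
noncomputable def nu (n m : ℕ) (z : ℂ) (b : ℕ → ℂ) : ℂ :=
  ∑ k ∈ Finset.Nat.antidiagonalTuple n m, ∏ j : Fin n, ((z - b (j : ℕ)) ^ (k j))⁻¹

/-!
Induction on `n`: split off the factor `(w - b₀)⁻¹` and apply the Leibniz rule. Its `m`-th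
derivative is `(-1)^m m! / (w - b₀)^(m+1)`, the binomial coefficient turns `i! (k-i)!` into `k!`,
and what remains is the convolution `ν_k(z, b) = Σ_{i+j=k} (z - b₀)^(-i) ν_j(z, b ∘ succ)`, which
comes from splitting off the first entry of a tuple summing to `k`.
-/

open Finset Nat

theorem Finset.Nat.sum_antidiagonalTuple_succ {M : Type*} [AddCommMonoid M] (k n : ℕ)
    (f : (Fin (k + 1) → ℕ) → M) :
    ∑ x ∈ antidiagonalTuple (k + 1) n, f x =
      ∑ p ∈ antidiagonal n, ∑ x ∈ antidiagonalTuple k p.2, f (Fin.cons p.1 x) := by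
  rw [Finset.sum_sigma']
  refine Finset.sum_nbij' (fun x => ⟨(x 0, n - x 0), Fin.tail x⟩) (fun s => Fin.cons s.1.1 s.2)
    ?_ ?_ ?_ ?_ ?_
  · intro x hx
    simp only [Finset.mem_sigma, HasAntidiagonal.mem_antidiagonal, mem_antidiagonalTuple] at hx ⊢
    rw [Fin.sum_univ_succ] at hx
    exact ⟨by omega, by simp only [Fin.tail]; omega⟩
  · rintro ⟨⟨i, j⟩, x⟩ hx
    simp only [Finset.mem_sigma, HasAntidiagonal.mem_antidiagonal, mem_antidiagonalTuple] at hx ⊢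
    rw [Fin.sum_univ_succ]
    simpa [hx.2] using hx.1
  · intro x _
    simp
  · rintro ⟨⟨i, j⟩, x⟩ hx
    simp only [Finset.mem_sigma, HasAntidiagonal.mem_antidiagonal] at hx
    simp [← hx.1]
  · intro x _
    simp

theorem iteratedDeriv_inv_sub_const {𝕜 : Type*} [NontriviallyNormedField 𝕜] (m : ℕ) (c z : 𝕜) :
    iteratedDeriv m (fun w => (w - c)⁻¹) z = (-1) ^ m * m ! * ((z - c) ^ (m + 1))⁻¹ := by
  rw [iteratedDeriv_comp_sub_const m Inv.inv c]
  beta_reduce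
  rw [iteratedDeriv_eq_iterate, iter_deriv_inv,
    show (-1 - m : ℤ) = -((m + 1 : ℕ) : ℤ) by push_cast; ring, zpow_neg, zpow_natCast]

theorem contDiffAt_inv_sub_const {𝕜 : Type*} [NontriviallyNormedField 𝕜] (k : ℕ) {c z : 𝕜}
    (hz : z ≠ c) : ContDiffAt 𝕜 k (fun w => (w - c)⁻¹) z :=
  (contDiffAt_id.sub contDiffAt_const).inv (sub_ne_zero.2 hz)

theorem iteratedDeriv_prod_range_succ_inv_sub (n k : ℕ) (b : ℕ → ℂ) {z : ℂ}
    (hz : ∀ j < n + 1, z ≠ b j) :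
    iteratedDeriv k (fun w : ℂ => ∏ j ∈ range (n + 1), (w - b j)⁻¹) z =
      ∑ i ∈ range (k + 1), k.choose i * ((-1) ^ i * i ! * ((z - b 0) ^ (i + 1))⁻¹) *
        iteratedDeriv (k - i) (fun w : ℂ => ∏ j ∈ range n, (w - b (j + 1))⁻¹) z := by
  have hsplit : (fun w : ℂ => ∏ j ∈ range (n + 1), (w - b j)⁻¹) =
      (fun w => (w - b 0)⁻¹) * fun w => ∏ j ∈ range n, (w - b (j + 1))⁻¹ := by
    ext w
    rw [prod_range_succ', mul_comm]
    rfl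
  have htail : ContDiffAt ℂ k (fun w : ℂ => ∏ j ∈ range n, (w - b (j + 1))⁻¹) z :=
    contDiffAt_prod fun j hj => contDiffAt_inv_sub_const k (hz (j + 1) (by simpa using hj))
  simp_rw [hsplit, iteratedDeriv_mul (contDiffAt_inv_sub_const k (hz 0 n.succ_pos)) htail,
    iteratedDeriv_inv_sub_const]

theorem nu_zero_left (k : ℕ) (z : ℂ) (b : ℕ → ℂ) : nu 0 k z b = if k = 0 then 1 else 0 := by
  cases k <;> simp [nu]

theorem nu_succ_left (n k : ℕ) (z : ℂ) (b : ℕ → ℂ) :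
    nu (n + 1) k z b =
      ∑ p ∈ antidiagonal k, ((z - b 0) ^ p.1)⁻¹ * nu n p.2 z (fun j => b (j + 1)) := by
  simp only [nu, Finset.Nat.sum_antidiagonalTuple_succ, mul_sum, Fin.prod_univ_succ]
  simp

theorem tau_succ_left (n : ℕ) (z : ℂ) (b : ℕ → ℂ) :
    tau (n + 1) z b = (z - b 0) * tau n z (fun j => b (j + 1)) := by
  rw [tau, tau, prod_range_succ', mul_comm]

theorem stmt_8_general (n : ℕ) (k : ℕ) (b : ℕ → ℂ) (z : ℂ)
    (hz : ∀ j < n, z ≠ b j) :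
    iteratedDeriv k (fun w : ℂ => ∏ j ∈ Finset.range n, (w - b j)⁻¹) z =
      (-1) ^ k * (k.factorial : ℂ) * nu n k z b / tau n z b := by
  induction n generalizing k b with
  | zero => cases k <;> simp [nu_zero_left, tau, iteratedDeriv_const]
  | succ n ih =>
    rw [iteratedDeriv_prod_range_succ_inv_sub n k b hz, nu_succ_left, tau_succ_left,
      Nat.sum_antidiagonal_eq_sum_range_succ (fun i j => ((z - b 0) ^ i)⁻¹ * nu n j z _),
      mul_sum, sum_div]
    refine sum_congr rfl fun i hi => ?_
    obtain ⟨j, rfl⟩ : ∃ j, k = i + j := ⟨k - i, by grind⟩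
    have hfact : ((i + j).choose i : ℂ) * i ! * j ! = (i + j)! := by
      rw [Nat.choose_symm_add]
      exact_mod_cast Nat.add_choose_mul_factorial_mul_factorial i j
    rw [Nat.add_sub_cancel_left, ih j _ fun j hj => hz (j + 1) (by omega), ← hfact, pow_add]
    generalize z - b 0 = d
    ring

/-- The k-th derivative of w ↦ ∏_{j=1}^n (w − b_j)^{−1} at z is (−1)^k k! ν_k(z,b)/τ_n(z,b). -/
theorem stmt_8 (n : ℕ) (hn : 1 ≤ n) (k : ℕ) (b : ℕ → ℂ) (z : ℂ)
    (hz : ∀ j < n, z ≠ b j) :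
    iteratedDeriv k (fun w : ℂ => ∏ j ∈ Finset.range n, (w - b j)⁻¹) z =
      (-1) ^ k * (k.factorial : ℂ) * nu n k z b / tau n z b :=
  stmt_8_general n k b z hz
end

section
/- Let λ > 0, let n, s be positive integers, let a_1, …, a_n be complex numbers in the upper half-plane, and let D_0, …, D_s ∈ ℂ. Define, for t ∈ ℝ, W(t) := Σ_{l=0}^{s} D_l/(iλ − t)^{l+1} and Q(t) := (τ_n(t, a)/τ_n(t, ā)) · Σ_{l=0}^{s} conj(D_l)/(−iλ − t)^{l+1}. Then ∫_{-∞}^{∞} |W(t) + Q(t)|² dt = 2 ∫_{-∞}^{∞} |W(t)|² dt. -/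
open MeasureTheory Complex

/-!
On the real line `|τ_n(t, a) / τ_n(t, ā)| = 1`, so `|W + Q|² = 2 |W|² + 2 Re F(t)` with
`F(z) = (τ_n(z, ā) / τ_n(z, a)) W(z)²`. The zeros of `τ_n(·, a)` and the pole `iλ` of `W` lie in
the upper half-plane, so `F` is holomorphic on the closed lower half-plane, and `F = O(|z|⁻²)` at
infinity. Closing the contour in the lower half-plane gives `∫ F = 0`.
-/

open Filter Bornology Asymptotics Topology Set ComplexConjugate

/-- Cauchy's theorem on the rectangle `[-R, R] × [-R, 0]`, whose three other sides lie outside the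
open disc of radius `R`. -/
lemma norm_intervalIntegral_ofReal_le {F : ℂ → ℂ} {R M : ℝ} (hR : 0 ≤ R)
    (hF : DifferentiableOn ℂ F {z | z.im ≤ 0})
    (hM : ∀ z : ℂ, z.im ≤ 0 → R ≤ ‖z‖ → ‖F z‖ ≤ M) :
    ‖∫ t in -R..R, F t‖ ≤ 4 * R * M := by
  have hrect := integral_boundary_rect_eq_zero_of_differentiableOn F ⟨-R, -R⟩ ⟨R, 0⟩ <|
    hF.mono fun z hz => by
      have him := (mem_reProdIm.1 hz).2
      rw [uIcc_of_le (neg_nonpos.2 hR)] at him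
      exact him.2
  simp only [ofReal_zero, zero_mul, add_zero, ofReal_neg] at hrect
  have hbot : ‖∫ x in -R..R, F (x + -R * I)‖ ≤ M * (2 * R) := by
    refine (intervalIntegral.norm_integral_le_of_norm_le_const fun x _ => hM _ (by simpa) ?_).trans
      (le_of_eq (by rw [abs_of_nonneg (by linarith)]; ring))
    simpa [abs_of_nonneg hR] using abs_im_le_norm (x + -R * I)
  have hside : ∀ c : ℝ, |c| = R → ‖∫ y in -R..0, F (c + y * I)‖ ≤ M * R := by
    intro c hc
    refine (intervalIntegral.norm_integral_le_of_norm_le_const fun y hy => hM _ ?_ ?_).trans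
      (le_of_eq (by simp [abs_of_nonneg hR]))
    · rw [uIoc_of_le (neg_nonpos.2 hR)] at hy
      simpa using hy.2
    · simpa [hc] using abs_re_le_norm (c + y * I)
  have hline : ∫ t in -R..R, F t = (∫ x in -R..R, F (x + -R * I)) +
      I • (∫ y in -R..0, F (R + y * I)) - I • (∫ y in -R..0, F (-R + y * I)) := by
    simp only [smul_eq_mul] at hrect ⊢
    linear_combination -hrect
  rw [hline]
  calc _ ≤ ‖∫ x in -R..R, F (x + -R * I)‖ + ‖I • (∫ y in -R..0, F (R + y * I))‖ +
        ‖I • (∫ y in -R..0, F (-R + y * I))‖ := norm_sub_le_of_le (norm_add_le _ _) le_rfl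
    _ ≤ M * (2 * R) + M * R + M * R := by
        simp only [norm_smul, norm_I, one_mul]
        refine add_le_add (add_le_add hbot (hside R (abs_of_nonneg hR))) ?_
        simpa using hside (-R) (by rw [abs_neg, abs_of_nonneg hR])
    _ = 4 * R * M := by ring

lemma isBigO_ofReal_inv_sq :
    (fun t : ℝ => (t : ℂ)⁻¹ ^ 2) =O[cobounded ℝ] fun t => (1 + t ^ 2)⁻¹ := by
  refine IsBigO.of_bound 2 ?_
  filter_upwards [eventually_cobounded_le_norm 1] with t ht
  have ht2 : 1 ≤ t ^ 2 := by simpa using one_le_pow₀ (n := 2) ht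
  have hpos : 0 < 1 + t ^ 2 := by positivity
  simp only [norm_pow, norm_inv, norm_real, Real.norm_eq_abs, inv_pow, sq_abs, abs_of_pos hpos]
  rw [← div_eq_mul_inv, le_div_iff₀ hpos, inv_mul_le_iff₀ (by linarith)]
  linarith

lemma integrable_ofReal_of_isBigO {F : ℂ → ℂ} (hc : Continuous fun t : ℝ => F t)
    (hF : F =O[cobounded ℂ] fun z => z⁻¹ ^ 2) : Integrable fun t : ℝ => F t := by
  refine hc.locallyIntegrable.integrable_of_isBigO_cocompact ?_
    (integrable_inv_one_add_sq.integrableAtFilter _)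
  rw [← Metric.cobounded_eq_cocompact]
  exact (hF.comp_tendsto (RCLike.tendsto_ofReal_cobounded_cobounded ℂ)).trans isBigO_ofReal_inv_sq

theorem integral_ofReal_eq_zero_of_isBigO {F : ℂ → ℂ} (hd : DifferentiableOn ℂ F {z | z.im ≤ 0})
    (hF : F =O[cobounded ℂ] fun z => z⁻¹ ^ 2) : ∫ t : ℝ, F t = 0 := by
  have hc : Continuous fun t : ℝ => F t :=
    hd.continuousOn.comp_continuous continuous_ofReal fun t => by simp
  obtain ⟨C, hC0, hC⟩ := hF.exists_pos
  obtain ⟨R₀, -, hR₀⟩ := hasBasis_cobounded_norm.eventually_iff.1 hC.bound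
  have hbound : ∀ R, max R₀ 1 ≤ R → ‖∫ t in -R..R, F t‖ ≤ 4 * C / R := by
    intro R hR
    have hRpos : 0 < R := by linarith [le_max_right R₀ 1]
    have := norm_intervalIntegral_ofReal_le (M := C / R ^ 2) hRpos.le hd fun z _ hz => by
      calc ‖F z‖ ≤ C * ‖z⁻¹ ^ 2‖ := hR₀ (le_trans (le_max_left _ _) (hR.trans hz))
        _ = C / ‖z‖ ^ 2 := by rw [norm_pow, norm_inv, inv_pow, div_eq_mul_inv]
        _ ≤ C / R ^ 2 := by gcongr
    rwa [show 4 * R * (C / R ^ 2) = 4 * C / R by field_simp] at this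
  refine tendsto_nhds_unique (intervalIntegral_tendsto_integral (integrable_ofReal_of_isBigO hc hF)
    tendsto_neg_atTop_atBot tendsto_id) ?_
  exact squeeze_zero_norm' ((eventually_ge_atTop _).mono hbound)
    (tendsto_id.const_div_atTop _)

lemma tau_ne_zero {n : ℕ} {z : ℂ} {b : ℕ → ℂ} (h : ∀ k < n, z ≠ b k) : tau n z b ≠ 0 :=
  Finset.prod_ne_zero_iff.2 fun k hk => sub_ne_zero.2 (h k (Finset.mem_range.1 hk))

lemma tau_conj (n : ℕ) (z : ℂ) (b : ℕ → ℂ) :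
    tau n (conj z) (fun k => conj (b k)) = conj (tau n z b) := by
  simp [tau, map_prod]

lemma differentiable_tau (n : ℕ) (b : ℕ → ℂ) : Differentiable ℂ fun z => tau n z b :=
  fun _ => .fun_finsetProd fun _ _ => differentiableAt_id.sub_const _

lemma tendsto_tau_div_tau_cobounded (n : ℕ) (a b : ℕ → ℂ) :
    Tendsto (fun z => tau n z b / tau n z a) (cobounded ℂ) (𝓝 1) := by
  have hfactor : ∀ k, Tendsto (fun z => (z - b k) / (z - a k)) (cobounded ℂ) (𝓝 1) := by
    intro k
    have hinv : Tendsto (fun z => (a k - z)⁻¹) (cobounded ℂ) (𝓝 0) :=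
      tendsto_inv₀_cobounded.comp (tendsto_const_sub_cobounded _)
    have hlim : Tendsto (fun z => 1 + (b k - a k) * (a k - z)⁻¹) (cobounded ℂ) (𝓝 1) := by
      simpa using (hinv.const_mul (b k - a k)).const_add 1
    refine hlim.congr' ?_
    filter_upwards [eventually_cobounded_le_norm (‖a k‖ + 1)] with z hz
    have hza : z ≠ a k := ne_of_apply_ne norm (by linarith)
    have h₁ : z - a k ≠ 0 := sub_ne_zero.2 hza
    have h₂ : a k - z ≠ 0 := sub_ne_zero.2 hza.symm
    field_simp
    ring
  simpa [tau, Finset.prod_div_distrib] using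
    tendsto_finsetProd (Finset.range n) fun k _ => hfactor k

noncomputable def principalPart (c : ℂ) (m : ℕ) (D : ℕ → ℂ) (z : ℂ) : ℂ :=
  ∑ l ∈ Finset.range m, D l / (c - z) ^ (l + 1)

lemma principalPart_conj (c : ℂ) (m : ℕ) (D : ℕ → ℂ) (z : ℂ) :
    principalPart (conj c) m (fun l => conj (D l)) (conj z) = conj (principalPart c m D z) := by
  simp [principalPart, map_sum]

lemma differentiableAt_principalPart {c z : ℂ} {m : ℕ} {D : ℕ → ℂ} (hz : z ≠ c) :
    DifferentiableAt ℂ (principalPart c m D) z :=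
  .fun_sum fun _ _ => (differentiableAt_const _).div
    (((differentiableAt_const _).sub differentiableAt_id).pow _)
    (pow_ne_zero _ (sub_ne_zero.2 hz.symm))

lemma isBigO_inv_const_sub (c : ℂ) :
    (fun z : ℂ => (c - z)⁻¹) =O[cobounded ℂ] fun z => z⁻¹ := by
  refine IsBigO.inv_rev (IsBigO.of_bound 2 ?_) ?_
  · filter_upwards [eventually_cobounded_le_norm (2 * ‖c‖)] with z hz
    linarith [norm_sub_norm_le z c, norm_sub_rev z c]
  · filter_upwards [eventually_cobounded_le_norm 1] with z hz h
    norm_num [h] at hz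

lemma isBigO_principalPart (c : ℂ) (m : ℕ) (D : ℕ → ℂ) :
    principalPart c m D =O[cobounded ℂ] fun z => z⁻¹ := by
  have hinv : Tendsto (fun z => (c - z)⁻¹) (cobounded ℂ) (𝓝 0) :=
    tendsto_inv₀_cobounded.comp (tendsto_const_sub_cobounded _)
  refine IsBigO.fun_sum fun l _ => ?_
  have hcoef : (fun z => D l * ((c - z)⁻¹) ^ l) =O[cobounded ℂ] fun _ => (1 : ℂ) :=
    ((hinv.pow l).const_mul (D l)).isBigO_one ℂ
  refine (hcoef.mul (isBigO_inv_const_sub c)).congr (fun z => ?_) fun z => one_mul _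
  rw [div_eq_mul_inv, ← inv_pow, pow_succ]
  ring

lemma integrable_norm_sq_principalPart_ofReal {c : ℂ} {m : ℕ} {D : ℕ → ℂ} (hc : c.im ≠ 0) :
    Integrable fun t : ℝ => ‖principalPart c m D t‖ ^ 2 := by
  have hcont : Continuous fun t : ℝ => principalPart c m D t ^ 2 :=
    continuous_iff_continuousAt.2 fun t =>
      ((differentiableAt_principalPart (ne_of_apply_ne im (by simpa using hc.symm))).pow
        2).continuousAt.comp continuous_ofReal.continuousAt
  simpa using (integrable_ofReal_of_isBigO hcont ((isBigO_principalPart c m D).pow 2)).norm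

lemma norm_add_div_conj_mul_conj_sq {T : ℂ} (hT : T ≠ 0) (w : ℂ) :
    ‖w + T / conj T * conj w‖ ^ 2 = 2 * ‖w‖ ^ 2 + 2 * (conj T / T * w ^ 2).re := by
  have hT' : conj T ≠ 0 := (map_ne_zero _).2 hT
  have key : (w + T / conj T * conj w) * conj (w + T / conj T * conj w) =
      2 * (w * conj w) + (conj T / T * w ^ 2 + conj (conj T / T * w ^ 2)) := by
    simp only [map_add, map_mul, map_div₀, conj_conj, map_pow]
    field_simp
    ring
  have hre := congrArg re key
  rw [mul_conj, mul_conj, add_conj] at hre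
  rw [Complex.sq_norm, Complex.sq_norm]
  simpa using hre

section lowerHalfPlane

variable {n m : ℕ} {a D : ℕ → ℂ} {c : ℂ}

lemma tau_ne_zero_of_im_nonpos (ha : ∀ k < n, 0 < (a k).im) {z : ℂ} (hz : z.im ≤ 0) :
    tau n z a ≠ 0 :=
  tau_ne_zero fun k hk h => by linarith [ha k hk, congrArg im h]

lemma differentiableOn_tau_div_tau_mul_principalPart_sq (ha : ∀ k < n, 0 < (a k).im)
    (hc : 0 < c.im) :
    DifferentiableOn ℂ
      (fun z => tau n z (fun k => conj (a k)) / tau n z a * principalPart c m D z ^ 2)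
      {z | z.im ≤ 0} := fun z hz =>
  (((differentiable_tau n _ z).div (differentiable_tau n a z)
    (tau_ne_zero_of_im_nonpos ha hz)).mul
      ((differentiableAt_principalPart (ne_of_apply_ne im (hz.trans_lt hc).ne)).pow
        2)).differentiableWithinAt

lemma isBigO_tau_div_tau_mul_principalPart_sq :
    (fun z => tau n z (fun k => conj (a k)) / tau n z a * principalPart c m D z ^ 2)
      =O[cobounded ℂ] fun z => z⁻¹ ^ 2 := by
  simpa using ((tendsto_tau_div_tau_cobounded n a _).isBigO_one ℂ).mul
    ((isBigO_principalPart c m D).pow 2)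

lemma norm_sq_principalPart_add_tau_div_tau_mul_conj (ha : ∀ k < n, 0 < (a k).im) (t : ℝ) :
    ‖principalPart c m D t + tau n t a / tau n t (fun k => conj (a k)) *
        principalPart (conj c) m (fun l => conj (D l)) t‖ ^ 2 =
      2 * ‖principalPart c m D t‖ ^ 2 +
        2 * (tau n t (fun k => conj (a k)) / tau n t a * principalPart c m D t ^ 2).re := by
  have hτ : tau n t (fun k => conj (a k)) = conj (tau n t a) := by
    simpa using tau_conj n t a
  rw [hτ, ← conj_ofReal t, principalPart_conj, conj_ofReal]
  exact norm_add_div_conj_mul_conj_sq (tau_ne_zero_of_im_nonpos ha (by simp)) _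

end lowerHalfPlane

theorem stmt_13_general (lam : ℝ) (hlam : 0 < lam) (n s : ℕ)
    (a : ℕ → ℂ) (ha : ∀ k < n, 0 < (a k).im) (D : ℕ → ℂ) :
    (∫ t : ℝ,
        ‖((∑ l ∈ Finset.range (s + 1), D l / (I * lam - t) ^ (l + 1)) +
              tau n t a / tau n t (fun k => starRingEnd ℂ (a k)) *
                ∑ l ∈ Finset.range (s + 1), starRingEnd ℂ (D l) / (-(I * lam) - t) ^ (l + 1))‖ ^
          2) =
      2 * ∫ t : ℝ,
        ‖(∑ l ∈ Finset.range (s + 1), D l / (I * lam - t) ^ (l + 1))‖ ^ 2 := by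
  set W := principalPart (I * lam) (s + 1) D
  set F : ℂ → ℂ := fun z => tau n z (fun k => conj (a k)) / tau n z a * W z ^ 2
  have hconj : conj (I * lam) = -(I * lam) := by simp
  have hpt : ∀ t : ℝ, ‖W t + tau n t a / tau n t (fun k => conj (a k)) *
      principalPart (conj (I * lam)) (s + 1) (fun l => conj (D l)) t‖ ^ 2 =
      2 * ‖W t‖ ^ 2 + 2 * (F t).re :=
    norm_sq_principalPart_add_tau_div_tau_mul_conj ha
  rw [hconj] at hpt
  have hc : 0 < (I * lam).im := by simpa using hlam
  have hFd : DifferentiableOn ℂ F {z | z.im ≤ 0} :=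
    differentiableOn_tau_div_tau_mul_principalPart_sq ha hc
  have hFO : F =O[cobounded ℂ] fun z => z⁻¹ ^ 2 := isBigO_tau_div_tau_mul_principalPart_sq
  have hFi : Integrable fun t : ℝ => F t :=
    integrable_ofReal_of_isBigO (hFd.continuousOn.comp_continuous continuous_ofReal (by simp)) hFO
  have hFre : ∫ t : ℝ, (F t).re = 0 := by
    simpa [integral_ofReal_eq_zero_of_isBigO hFd hFO] using integral_re hFi
  have hFrei : Integrable fun t : ℝ => (F t).re := hFi.re
  refine (integral_congr_ae (.of_forall hpt)).trans ?_
  rw [integral_add ((integrable_norm_sq_principalPart_ofReal hc.ne').const_mul 2)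
    (hFrei.const_mul 2), integral_const_mul, integral_const_mul, hFre, mul_zero, add_zero]
  rfl

/-- With W(t) := Σ_{l=0}^s D_l/(iλ − t)^{l+1} and
Q(t) := (τ_n(t,a)/τ_n(t,ā)) Σ_{l=0}^s conj(D_l)/(−iλ − t)^{l+1},
one has ∫ |W + Q|² dt = 2 ∫ |W|² dt. -/
theorem stmt_13 (lam : ℝ) (hlam : 0 < lam) (n s : ℕ) (hn : 1 ≤ n) (hs : 1 ≤ s)
    (a : ℕ → ℂ) (ha : ∀ k < n, 0 < (a k).im) (D : ℕ → ℂ) :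
    (∫ t : ℝ,
        ‖((∑ l ∈ Finset.range (s + 1), D l / (I * lam - t) ^ (l + 1)) +
              tau n t a / tau n t (fun k => starRingEnd ℂ (a k)) *
                ∑ l ∈ Finset.range (s + 1), starRingEnd ℂ (D l) / (-(I * lam) - t) ^ (l + 1))‖ ^
          2) =
      2 * ∫ t : ℝ,
        ‖(∑ l ∈ Finset.range (s + 1), D l / (I * lam - t) ^ (l + 1))‖ ^ 2 :=
  stmt_13_general lam hlam n s a ha D
end
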